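/- Completeness of the regression search algorithm: let N be a set of plan-state pairs reachable by Solve(P) from {⟨[], δ_G⟩} that is saturated, i.e., no step of type 4.1 or 4.2 can add to N a pair whose p-state is not already in N_s. If the planning problem P has a regression solution, then N contains a plan-state pair ⟨c',δ'⟩ with σ_I ∈ ext(δ') (so that c' is a regression solution of P). -/
import Mathlib


open scoped Classical

/-! ## States -/

/-- A state: a pair of finite sets of fluents (true ones and false ones).
Used for both a-states (when the two sets are disjoint, see `St.OK`) and
p-states (partial states). -/
structure St (V : Type*) where
  T : Finset V
  F : Finset V
deriving DecidableEq

variable {V : Type*} [DecidableEq V]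

/-- A pair of sets of fluents is a genuine (a- or p-) state when the sets are disjoint. -/
def St.OK (s : St V) : Prop := Disjoint s.T s.F

/-- The extension set `ext(δ)` of a p-state `δ`: all a-states extending it. -/
def exts (δ : St V) : Set (St V) := {σ | σ.OK ∧ δ.T ⊆ σ.T ∧ δ.F ⊆ σ.F}

/-- `δ'` is a partial extension of `δ`. -/
def pext (δ δ' : St V) : Prop := δ.T ⊆ δ'.T ∧ δ.F ⊆ δ'.F

/-! ## Actions -/

/-- A non-sensing action: precondition literals (positive part `preP`, negative part
`preN`), and disjoint add and delete lists. -/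
structure NAct (V : Type*) where
  preP : Finset V
  preN : Finset V
  add : Finset V
  del : Finset V
  hdisj : Disjoint add del

/-- A sensing action: precondition literals and a set of sensed fluents not occurring
in the precondition. -/
structure SAct (V : Type*) where
  preP : Finset V
  preN : Finset V
  sens : Finset V
  hsens : Disjoint sens (preP ∪ preN)

/-- Executability of a non-sensing action in an a-state. -/
def NAct.execIn (a : NAct V) (σ : St V) : Prop := a.preP ⊆ σ.T ∧ a.preN ⊆ σ.F

/-- Executability of a sensing action in an a-state. -/
def SAct.execIn (a : SAct V) (σ : St V) : Prop := a.preP ⊆ σ.T ∧ a.preN ⊆ σ.F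

/-- The result of executing a non-sensing action `a` in an a-state `σ`. -/
def NAct.res (a : NAct V) (σ : St V) : St V :=
  ⟨σ.T \ a.del ∪ a.add, σ.F \ a.add ∪ a.del⟩

/-- The transition function `Φ` for a non-sensing action (`none` plays the role of `⊥`). -/
def PhiN (a : NAct V) (σ : St V) : Set (Option (St V)) :=
  {x | (a.execIn σ ∧ x = some (a.res σ)) ∨ (¬ a.execIn σ ∧ x = none)}

/-- The possible results of executing a sensing action `a` in an a-state `σ`. -/
def sres (a : SAct V) (σ : St V) : Set (St V) :=
  {σ' | σ'.OK ∧ σ.T ⊆ σ'.T ∧ σ.F ⊆ σ'.F ∧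
    (σ'.T \ σ.T) ∪ (σ'.F \ σ.F) = a.sens \ (σ.T ∪ σ.F)}

/-- The transition function `Φ` for a sensing action (`none` plays the role of `⊥`). -/
def PhiS (a : SAct V) (σ : St V) : Set (Option (St V)) :=
  {x | (a.execIn σ ∧ ∃ σ' ∈ sres a σ, x = some σ') ∨ (¬ a.execIn σ ∧ x = none)}

/-! ## Regression for single actions -/

/-- Applicability of a non-sensing action `a` in a p-state `δ`. -/
def AppN (a : NAct V) (δ : St V) : Prop :=
  ((a.add ∩ δ.T).Nonempty ∨ (a.del ∩ δ.F).Nonempty) ∧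
  Disjoint a.add δ.F ∧ Disjoint a.del δ.T ∧
  a.preP ∩ δ.F ⊆ a.del ∧ a.preN ∩ δ.T ⊆ a.add

/-- Regression of a non-sensing action over a p-state (`none` is `⊥`). -/
noncomputable def RegressN (a : NAct V) (δ : St V) : Option (St V) :=
  if AppN a δ then some ⟨δ.T \ a.add ∪ a.preP, δ.F \ a.del ∪ a.preN⟩ else none

/-- `X` is a sensed set of the set `Δ` of (distinct) p-states with respect to the sensing
action `a`, i.e. `X` is a nonempty subset of `Sens_a` and `Δ` is proper with respect to `X`. -/
def SensedSet (a : SAct V) (Δ : Finset (St V)) (X : Finset V) : Prop :=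
  X.Nonempty ∧ X ⊆ a.sens ∧
  (∀ δ ∈ Δ, a.sens ⊆ δ.T ∪ δ.F) ∧
  Δ.card = 2 ^ X.card ∧
  (∀ P Q : Finset V, Disjoint P Q → P ∪ Q = X →
    ∃! δ, δ ∈ Δ ∧ δ.T ∩ X = P ∧ δ.F ∩ X = Q) ∧
  (∀ δ ∈ Δ, ∀ δ' ∈ Δ, δ ≠ δ' → δ.T \ X = δ'.T \ X ∧ δ.F \ X = δ'.F \ X)

/-- Strong applicability of a sensing action in a set of p-states. -/
def StrongApp (a : SAct V) (Δ : Finset (St V)) : Prop :=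
  (∃ X, SensedSet a Δ X) ∧ ∀ δ ∈ Δ, Disjoint a.preP δ.F ∧ Disjoint a.preN δ.T

/-- Applicability of a sensing action in a set of p-states: some family of partial
extensions of the members of `Δ` makes `a` strongly applicable, and `Sens_a` is known
in every member of `Δ`. -/
def AppS (a : SAct V) (Δ : Finset (St V)) : Prop :=
  (∃ e : St V → St V, (∀ δ ∈ Δ, pext δ (e δ)) ∧ Set.InjOn e ↑Δ ∧ StrongApp a (Δ.image e)) ∧
  (∀ δ ∈ Δ, a.sens ⊆ δ.T ∪ δ.F)

/-- `S_{a,Δ}`: the sensed set of a family of partial extensions of `Δ`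
(well-defined by the "unique sensed set" lemma). -/
noncomputable def SaD (a : SAct V) (Δ : Finset (St V)) : Finset V :=
  if h : ∃ X, ∃ e : St V → St V, (∀ δ ∈ Δ, pext δ (e δ)) ∧ Set.InjOn e ↑Δ ∧
      SensedSet a (Δ.image e) X
  then h.choose else ∅

/-- Regression of a sensing action over a set of p-states (`none` is `⊥`). -/
noncomputable def RegressS (a : SAct V) (Δ : Finset (St V)) : Option (St V) :=
  if AppS a Δ then
    some ⟨(Δ.sup St.T) \ SaD a Δ ∪ a.preP, (Δ.sup St.F) \ SaD a Δ ∪ a.preN⟩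
  else none

/-! ## Formulas (conjunctions of fluent literals) -/

/-- A conjunction of fluent literals, given by its positive and negative fluents. -/
abbrev Form (V : Type*) := Finset V × Finset V

/-- A conjunction of literals is consistent if no fluent occurs both positively and
negatively. -/
def Consistent (φ : Form V) : Prop := Disjoint φ.1 φ.2

/-- Two conjunctions of literals are mutually exclusive. -/
def MutEx (φ ψ : Form V) : Prop := ¬ Disjoint φ.1 ψ.2 ∨ ¬ Disjoint ψ.1 φ.2

/-- A conjunction of literals holds in an a-state. -/
def holds (φ : Form V) (σ : St V) : Prop := φ.1 ⊆ σ.T ∧ φ.2 ⊆ σ.F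

/-- `BIN S`: all binary representations of the nonempty set of fluents `S`. -/
def BIN (S : Finset V) : Finset (Form V) :=
  S.powerset.image (fun P => (P, S \ P))

/-- The set of conjunctions `χ` spans over the set of fluents `S`. -/
def spans (χ : Finset (Form V)) (S : Finset V) : Prop :=
  ∃ φ : Form V, Consistent φ ∧ φ ∉ χ ∧ Disjoint S (φ.1 ∪ φ.2) ∧
    χ = (BIN S).image (fun ψ => (φ.1 ∪ ψ.1, φ.2 ∪ ψ.2))

/-! ## Conditional plans -/

/-- Conditional plans. -/
inductive Plan (V : Type*) where
  | empty : Plan V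
  | action : NAct V → Plan V
  | pcase : SAct V → List (Form V × Plan V) → Plan V
  | seq : Plan V → Plan V → Plan V

/-- Well-formedness of a conditional plan: in every case plan the guards are
consistent and pairwise mutually exclusive conjunctions of literals. -/
inductive Plan.WF : Plan V → Prop
  | empty : Plan.WF .empty
  | action (a : NAct V) : Plan.WF (.action a)
  | pcase (a : SAct V) (bs : List (Form V × Plan V)) :
      (∀ b ∈ bs, Consistent b.1) →
      bs.Pairwise (fun b b' => MutEx b.1 b'.1) →
      (∀ b ∈ bs, Plan.WF b.2) → Plan.WF (.pcase a bs)
  | seq {c₁ c₂ : Plan V} : Plan.WF c₁ → Plan.WF c₂ → Plan.WF (.seq c₁ c₂)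

/-- The graph of the extended transition function `Φ*`:
`PhiStarR c x y` means `y ∈ Φ*(c, x)` (where `none` is `⊥`). -/
inductive PhiStarR : Plan V → Option (St V) → Option (St V) → Prop
  | bot (c : Plan V) : PhiStarR c none none
  | empty (σ : St V) : PhiStarR .empty (some σ) (some σ)
  | action (a : NAct V) (σ : St V) (x : Option (St V)) :
      x ∈ PhiN a σ → PhiStarR (.action a) (some σ) x
  | caseBot (a : SAct V) (bs : List (Form V × Plan V)) (σ : St V) :
      none ∈ PhiS a σ → PhiStarR (.pcase a bs) (some σ) none
  | caseHit (a : SAct V) (bs : List (Form V × Plan V)) (σ σ' : St V)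
      (φ : Form V) (p : Plan V) (x : Option (St V)) :
      some σ' ∈ PhiS a σ → (φ, p) ∈ bs → holds φ σ' →
      PhiStarR p (some σ') x → PhiStarR (.pcase a bs) (some σ) x
  | caseMiss (a : SAct V) (bs : List (Form V × Plan V)) (σ σ' : St V) :
      some σ' ∈ PhiS a σ → (∀ b ∈ bs, ¬ holds b.1 σ') →
      PhiStarR (.pcase a bs) (some σ) none
  | seq (c₁ c₂ : Plan V) (σ : St V) (y x : Option (St V)) :
      PhiStarR c₁ (some σ) y → PhiStarR c₂ y x → PhiStarR (.seq c₁ c₂) (some σ) x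

/-- `R(cᵢ,δ)` from the definition of `Regress*` on case plans (the consistent case). -/
def Rform (φ : Form V) (st : St V) : St V := ⟨st.T ∪ φ.1, st.F ∪ φ.2⟩

/-- The graph of the extended regression function `Regress*`:
`RegStarR c x y` means `Regress*(c, x) = y` (where `none` is `⊥`). -/
inductive RegStarR : Plan V → Option (St V) → Option (St V) → Prop
  | bot (c : Plan V) : RegStarR c none none
  | empty (δ : St V) : RegStarR .empty (some δ) (some δ)
  | action (a : NAct V) (δ : St V) : RegStarR (.action a) (some δ) (RegressN a δ)
  | caseBot (a : SAct V) (bs : List (Form V × Plan V)) (δ : St V)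
      (b : Form V × Plan V) :
      b ∈ bs → RegStarR b.2 (some δ) none → RegStarR (.pcase a bs) (some δ) none
  | caseRBot (a : SAct V) (bs : List (Form V × Plan V)) (δ : St V)
      (b : Form V × Plan V) (st : St V) :
      b ∈ bs → RegStarR b.2 (some δ) (some st) →
      ¬ (Disjoint b.1.1 st.F ∧ Disjoint b.1.2 st.T) →
      RegStarR (.pcase a bs) (some δ) none
  | caseGo (a : SAct V) (bs : List (Form V × Plan V)) (δ : St V)
      (r : Form V × Plan V → St V) :
      (∀ b ∈ bs, RegStarR b.2 (some δ) (some (r b))) →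
      (∀ b ∈ bs, Disjoint b.1.1 (r b).F ∧ Disjoint b.1.2 (r b).T) →
      RegStarR (.pcase a bs) (some δ)
        (RegressS a ((bs.map (fun b => Rform b.1 (r b))).toFinset))
  | seq (c₁ c₂ : Plan V) (δ : St V) (y x : Option (St V)) :
      RegStarR c₂ (some δ) y → RegStarR c₁ y x → RegStarR (.seq c₁ c₂) (some δ) x

/-! ## Subplans, redundancy, regressability -/

/-- One editing step producing a "smaller" plan: removing an instance of a
non-sensing action, removing a case plan or one of its branches, or replacing a
sensing action by a sub sensing action; possibly deep inside the plan. -/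
inductive Edit : Plan V → Plan V → Prop
  | dropAct (a : NAct V) : Edit (.action a) .empty
  | dropCase (a : SAct V) (bs : List (Form V × Plan V)) : Edit (.pcase a bs) .empty
  | dropBranch (a : SAct V) (b : Form V × Plan V) (l₁ l₂ : List (Form V × Plan V)) :
      Edit (.pcase a (l₁ ++ b :: l₂)) (.pcase a (l₁ ++ l₂))
  | subSense (a a' : SAct V) (bs : List (Form V × Plan V)) :
      a'.preP = a.preP → a'.preN = a.preN → a'.sens ⊂ a.sens →
      Edit (.pcase a bs) (.pcase a' bs)
  | inBranch (a : SAct V) (φ : Form V) (p p' : Plan V) (l₁ l₂ : List (Form V × Plan V)) :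
      Edit p p' →
      Edit (.pcase a (l₁ ++ (φ, p) :: l₂)) (.pcase a (l₁ ++ (φ, p') :: l₂))
  | seqL {c₁ c₁' : Plan V} (c₂ : Plan V) : Edit c₁ c₁' → Edit (.seq c₁ c₂) (.seq c₁' c₂)
  | seqR {c₂ c₂' : Plan V} (c₁ : Plan V) : Edit c₂ c₂' → Edit (.seq c₁ c₂) (.seq c₁ c₂')

/-- `c'` is a subplan of `c`. -/
def IsSubplan (c' c : Plan V) : Prop := Relation.TransGen Edit c c'

/-- `⊥ ∉ Φ*(c,σ)` and `Φ*(c,σ) ⊆ ext(δ)`. -/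
def Achieves (c : Plan V) (σ δ : St V) : Prop :=
  ∀ x, PhiStarR c (some σ) x → ∃ σ' ∈ exts δ, x = some σ'

/-- `c` is redundant with respect to `(σ,δ)`. -/
def Redundant (c : Plan V) (σ δ : St V) : Prop :=
  Achieves c σ δ ∧ ∃ c', IsSubplan c' c ∧ Achieves c' σ δ

/-- A case plan `a;case(φ₁→c₁,…,φₙ→cₙ)` is possibly regressable. -/
def PRCase (a : SAct V) (bs : List (Form V × Plan V)) : Prop :=
  (∃ S : Finset V, S.Nonempty ∧ S ⊆ a.sens ∧ spans (bs.map Prod.fst).toFinset S) ∧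
  ∀ b ∈ bs, a.sens ⊆ b.1.1 ∪ b.1.2

/-- Every case plan occurring in `c` is possibly regressable. -/
inductive AllCasesPR : Plan V → Prop
  | empty : AllCasesPR .empty
  | action (a : NAct V) : AllCasesPR (.action a)
  | pcase (a : SAct V) (bs : List (Form V × Plan V)) :
      PRCase a bs → (∀ b ∈ bs, AllCasesPR b.2) → AllCasesPR (.pcase a bs)
  | seq {c₁ c₂ : Plan V} : AllCasesPR c₁ → AllCasesPR c₂ → AllCasesPR (.seq c₁ c₂)

/-- `c` is regressable with respect to `(σ,δ)`. -/
def Regressable (c : Plan V) (σ δ : St V) : Prop :=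
  AllCasesPR c ∧ Achieves c σ δ ∧ ¬ Redundant c σ δ

/-! ## Normalized plans -/

/-- Normalized conditional plans: a sequence of non-sensing actions followed by
either nothing or a case plan all of whose branches are normalized. -/
inductive Normalized : Plan V → Prop
  | empty : Normalized .empty
  | single (a : NAct V) : Normalized (.action a)
  | pcase (a : SAct V) (bs : List (Form V × Plan V)) :
      (∀ b ∈ bs, Normalized b.2) → Normalized (.pcase a bs)
  | cons (a : NAct V) {c : Plan V} : Normalized c → Normalized (.seq (.action a) c)

/-- `normSeq c k` normalizes the plan `c ; k`, assuming `k` is already normalized. -/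
def normSeq : Plan V → Plan V → Plan V
  | .empty, k => k
  | .action a, k => .seq (.action a) k
  | .pcase a bs, k => .pcase a (bs.attach.map (fun b => (b.1.1, normSeq b.1.2 k)))
  | .seq c₁ c₂, k => normSeq c₁ (normSeq c₂ k)
termination_by c _ => sizeOf c
decreasing_by
  all_goals simp_wf
  all_goals first
    | omega
    | (have h := List.sizeOf_lt_of_mem b.2
       obtain ⟨⟨f, p⟩, hb⟩ := b
       simp at *
       omega)

/-- `normalized(c)`. -/
def normalizePlan (c : Plan V) : Plan V := normSeq c .empty

/-! ## Sequences of non-sensing actions -/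

/-- The conditional plan `a₁;…;aₙ;k` determined by a list of non-sensing actions. -/
def seqP : List (NAct V) → Plan V → Plan V
  | [], k => k
  | a :: t, k => .seq (.action a) (seqP t k)

instance (a : NAct V) (σ : St V) : Decidable (a.execIn σ) :=
  inferInstanceAs (Decidable (a.preP ⊆ σ.T ∧ a.preN ⊆ σ.F))

/-- `Φ*` specialized to a sequence of non-sensing actions, as a function
(`none` is `⊥`). -/
def runSeq : List (NAct V) → St V → Option (St V)
  | [], σ => some σ
  | a :: t, σ => if a.execIn σ then runSeq t (a.res σ) else none

/-- `Regress*` specialized to a sequence of non-sensing actions, as a function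
(`none` is `⊥`). -/
noncomputable def regSeq : List (NAct V) → St V → Option (St V)
  | [], δ => some δ
  | a :: t, δ => match regSeq t δ with
      | none => none
      | some δ' => RegressN a δ'

/-- For a sequence of non-sensing actions: `⊥ ∉ Φ*(l,σ)` and `Φ*(l,σ) ⊆ ext(δ)`. -/
def SeqAchieves (l : List (NAct V)) (σ δ : St V) : Prop :=
  ∃ σ', runSeq l σ = some σ' ∧ σ' ∈ exts δ

/-- Redundancy of a sequence of non-sensing actions with respect to `(σ,δ)`
(a subplan of a sequence is a proper sublist of it). -/
def SeqRedundant (l : List (NAct V)) (σ δ : St V) : Prop :=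
  SeqAchieves l σ δ ∧ ∃ l', List.Sublist l' l ∧ l' ≠ l ∧ SeqAchieves l' σ δ

/-- Regressability of a sequence of non-sensing actions with respect to `(σ,δ)`. -/
def SeqRegressable (l : List (NAct V)) (σ δ : St V) : Prop :=
  SeqAchieves l σ δ ∧ ¬ SeqRedundant l σ δ

/-! ## The regression search algorithm -/

/-- The sets of plan-state pairs reachable by the algorithm `Solve(P)` from the
initial set `{⟨[], δ_G⟩}` using steps 4.1 (non-sensing regression) and 4.2
(sensing regression). -/
inductive Reach (δG : St V) : Set (Plan V × St V) → Prop
  | init : Reach δG {(Plan.empty, δG)}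
  | step1 {N : Set (Plan V × St V)} (c : Plan V) (δ : St V) (a : NAct V) (δ' : St V) :
      Reach δG N → (c, δ) ∈ N → RegressN a δ = some δ' →
      (∀ p ∈ N, p.2 ≠ δ') →
      Reach δG (insert (Plan.seq (.action a) c, δ') N)
  | step2 {N : Set (Plan V × St V)} (a : SAct V) (bs : List (Form V × Plan V))
      (ds : Form V × Plan V → St V) (S : Finset V) (δ' : St V) :
      Reach δG N →
      (∀ b ∈ bs, (b.2, ds b) ∈ N) →
      S.Nonempty → S ⊆ a.sens → spans (bs.map Prod.fst).toFinset S →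
      (∀ b ∈ bs, (Rform b.1 (ds b)).OK) →
      RegressS a ((bs.map (fun b => Rform b.1 (ds b))).toFinset) = some δ' →
      (∀ p ∈ N, p.2 ≠ δ') →
      Reach δG (insert (Plan.pcase a bs, δ') N)

/-- `N` is saturated: no step of type 4.1 or 4.2 can produce a p-state not
already occurring in `N`. -/
def Saturated (N : Set (Plan V × St V)) : Prop :=
  (∀ (c : Plan V) (δ : St V) (a : NAct V) (δ' : St V),
      (c, δ) ∈ N → RegressN a δ = some δ' → ∃ p ∈ N, p.2 = δ') ∧
  (∀ (a : SAct V) (bs : List (Form V × Plan V)) (ds : Form V × Plan V → St V)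
      (S : Finset V) (δ' : St V),
      (∀ b ∈ bs, (b.2, ds b) ∈ N) →
      S.Nonempty → S ⊆ a.sens → spans (bs.map Prod.fst).toFinset S →
      (∀ b ∈ bs, (Rform b.1 (ds b)).OK) →
      RegressS a ((bs.map (fun b => Rform b.1 (ds b))).toFinset) = some δ' →
      ∃ p ∈ N, p.2 = δ')

set_option linter.unusedSectionVars false
set_option linter.unusedVariables false

/-! ### Auxiliary lemmas for completeness -/

lemma St.ok_mono {δ δ' : St V} (h : δ'.OK) (hT : δ.T ⊆ δ'.T) (hF : δ.F ⊆ δ'.F) :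
    δ.OK := h.mono hT hF

lemma reach_empty_mem {δG : St V} {N : Set (Plan V × St V)} (h : Reach δG N) :
    (Plan.empty, δG) ∈ N := by
  induction h with
  | init => simp
  | step1 _ _ _ _ _ _ _ _ ih => exact Set.mem_insert_of_mem _ ih
  | step2 _ _ _ _ _ _ _ _ _ _ _ _ _ ih => exact Set.mem_insert_of_mem _ ih

lemma regStarR_none_inv {c : Plan V} {x : Option (St V)} (h : RegStarR c none x) :
    x = none := by cases h; rfl

lemma regressN_some_iff {a : NAct V} {δ δ' : St V} :
    RegressN a δ = some δ' ↔
      AppN a δ ∧ δ' = ⟨δ.T \ a.add ∪ a.preP, δ.F \ a.del ∪ a.preN⟩ := by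
  unfold RegressN; split <;> simp_all [eq_comm]

lemma regressN_ok_back {a : NAct V} {δ δ' : St V} (h : RegressN a δ = some δ')
    (hok : δ'.OK) : δ.OK := by
  rw [regressN_some_iff] at h
  obtain ⟨⟨-, hAF, hDT, -, -⟩, rfl⟩ := h
  rw [St.OK, Finset.disjoint_left]
  intro f hfT hfF
  have h1 : f ∈ δ.T \ a.add ∪ a.preP :=
    Finset.mem_union_left _ (Finset.mem_sdiff.mpr
      ⟨hfT, fun hf => Finset.disjoint_left.mp hAF hf hfF⟩)
  have h2 : f ∈ δ.F \ a.del ∪ a.preN :=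
    Finset.mem_union_left _ (Finset.mem_sdiff.mpr
      ⟨hfF, fun hf => Finset.disjoint_left.mp hDT hf hfT⟩)
  exact Finset.disjoint_left.mp hok h1 h2

lemma sensedSet_part {a : SAct V} {Δ : Finset (St V)} {X : Finset V}
    (h : SensedSet a Δ X) : ∀ η ∈ Δ, η.F ∩ X = X \ (η.T ∩ X) := by
  obtain ⟨-, -, -, hcard, huniq, -⟩ := h
  have hux : ∀ P ∈ X.powerset, ∃! δ, δ ∈ Δ ∧ δ.T ∩ X = P ∧ δ.F ∩ X = X \ P := by
    intro P hP
    exact huniq P (X \ P) Finset.disjoint_sdiff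
      (Finset.union_sdiff_of_subset (Finset.mem_powerset.mp hP))
  have hsurj := Finset.surj_on_of_inj_on_of_card_le
    (s := X.powerset) (t := Δ) (fun P hP => (hux P hP).choose)
    (fun P hP => ((hux P hP).choose_spec).1.1)
    (fun P₁ P₂ hP₁ hP₂ heq => by
      have e₁ := ((hux P₁ hP₁).choose_spec).1.2.1
      have e₂ := ((hux P₂ hP₂).choose_spec).1.2.1
      rw [← e₁, ← e₂]
      exact congrArg (fun s : St V => s.T ∩ X) heq)
    (by rw [hcard, Finset.card_powerset])
  intro η hη
  obtain ⟨P, hP, rfl⟩ := hsurj η hη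
  have := ((hux P hP).choose_spec).1
  rw [this.2.1, this.2.2]

lemma part_transfer {η ε : St V} {X : Finset V} (hok : η.OK)
    (hcov : X ⊆ η.T ∪ η.F) (hT : η.T ⊆ ε.T) (hF : η.F ⊆ ε.F)
    (hpart : ε.F ∩ X = X \ (ε.T ∩ X)) :
    η.T ∩ X = ε.T ∩ X ∧ η.F ∩ X = ε.F ∩ X := by
  constructor
  · apply subset_antisymm (Finset.inter_subset_inter hT subset_rfl)
    intro f hf
    have hfX : f ∈ X := (Finset.mem_inter.mp hf).2
    rcases Finset.mem_union.mp (hcov hfX) with h | h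
    · exact Finset.mem_inter.mpr ⟨h, hfX⟩
    · exfalso
      have : f ∈ ε.F ∩ X := Finset.mem_inter.mpr ⟨hF h, hfX⟩
      rw [hpart] at this
      exact (Finset.mem_sdiff.mp this).2 hf
  · apply subset_antisymm (Finset.inter_subset_inter hF subset_rfl)
    intro f hf
    have hfX : f ∈ X := (Finset.mem_inter.mp hf).2
    rcases Finset.mem_union.mp (hcov hfX) with h | h
    · exfalso
      have h2 : f ∈ ε.T ∩ X := Finset.mem_inter.mpr ⟨hT h, hfX⟩
      rw [hpart] at hf
      exact (Finset.mem_sdiff.mp hf).2 h2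
    · exact Finset.mem_inter.mpr ⟨h, hfX⟩

lemma appS_exists {a : SAct V} {Δ : Finset (St V)} (h : AppS a Δ) :
    ∃ X, ∃ e : St V → St V, (∀ δ ∈ Δ, pext δ (e δ)) ∧ Set.InjOn e ↑Δ ∧
      SensedSet a (Δ.image e) X := by
  obtain ⟨⟨e, hp, hi, ⟨⟨X, hX⟩, -⟩⟩, -⟩ := h
  exact ⟨X, e, hp, hi, hX⟩

lemma saD_spec {a : SAct V} {Δ : Finset (St V)}
    (h : ∃ X, ∃ e : St V → St V, (∀ δ ∈ Δ, pext δ (e δ)) ∧ Set.InjOn e ↑Δ ∧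
      SensedSet a (Δ.image e) X) :
    ∃ e : St V → St V, (∀ δ ∈ Δ, pext δ (e δ)) ∧ Set.InjOn e ↑Δ ∧
      SensedSet a (Δ.image e) (SaD a Δ) := by
  rw [SaD, dif_pos h]
  exact h.choose_spec

lemma regressS_some_iff {a : SAct V} {Δ : Finset (St V)} {δ' : St V} :
    RegressS a Δ = some δ' ↔ AppS a Δ ∧
      δ' = ⟨(Δ.sup St.T) \ SaD a Δ ∪ a.preP, (Δ.sup St.F) \ SaD a Δ ∪ a.preN⟩ := by
  unfold RegressS; split <;> simp_all [eq_comm]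

lemma regressS_members_ok {a : SAct V} {Δ : Finset (St V)} {δ' : St V}
    (h : RegressS a Δ = some δ') (hok : δ'.OK) : ∀ η ∈ Δ, η.OK := by
  rw [regressS_some_iff] at h
  obtain ⟨hApp, rfl⟩ := h
  obtain ⟨e, hp, hi, hs⟩ := saD_spec (appS_exists hApp)
  intro η hη
  rw [St.OK, Finset.disjoint_left]
  intro f hfT hfF
  have hfX : f ∉ SaD a Δ := by
    intro hfX
    have h1 : f ∈ (e η).T ∩ SaD a Δ := Finset.mem_inter.mpr ⟨(hp η hη).1 hfT, hfX⟩
    have h2 : f ∈ (e η).F ∩ SaD a Δ := Finset.mem_inter.mpr ⟨(hp η hη).2 hfF, hfX⟩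
    rw [sensedSet_part hs (e η) (Finset.mem_image_of_mem e hη)] at h2
    exact (Finset.mem_sdiff.mp h2).2 h1
  have hT : f ∈ Δ.sup St.T := Finset.mem_sup.mpr ⟨η, hη, hfT⟩
  have hF : f ∈ Δ.sup St.F := Finset.mem_sup.mpr ⟨η, hη, hfF⟩
  exact Finset.disjoint_left.mp hok
    (Finset.mem_union_left _ (Finset.mem_sdiff.mpr ⟨hT, hfX⟩))
    (Finset.mem_union_left _ (Finset.mem_sdiff.mpr ⟨hF, hfX⟩))

lemma sensed_subset {a : SAct V} {Δ : Finset (St V)} {X : Finset V} {e : St V → St V}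
    (hOK : ∀ η ∈ Δ, η.OK) (hknown : ∀ η ∈ Δ, a.sens ⊆ η.T ∪ η.F)
    (hp : ∀ δ ∈ Δ, pext δ (e δ)) (hs : SensedSet a (Δ.image e) X) :
    X ⊆ a.sens ∩ (Δ.sup St.T ∩ Δ.sup St.F) := by
  intro f hf
  have hXsens : X ⊆ a.sens := hs.2.1
  have huniq := hs.2.2.2.2.1
  have hpt : ∀ η ∈ Δ, η.T ∩ X = (e η).T ∩ X ∧ η.F ∩ X = (e η).F ∩ X := by
    intro η hη
    exact part_transfer (hOK η hη) (hXsens.trans (hknown η hη)) (hp η hη).1 (hp η hη).2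
      (sensedSet_part hs (e η) (Finset.mem_image_of_mem e hη))
  obtain ⟨ε₁, ⟨hε₁, hT1, _⟩, -⟩ := huniq X ∅ (Finset.disjoint_empty_right X) (Finset.union_empty X)
  obtain ⟨η₁, hη₁, rfl⟩ := Finset.mem_image.mp hε₁
  obtain ⟨ε₂, ⟨hε₂, _, hF2⟩, -⟩ := huniq ∅ X (Finset.disjoint_empty_left X) (Finset.empty_union X)
  obtain ⟨η₂, hη₂, rfl⟩ := Finset.mem_image.mp hε₂
  have hf1 : f ∈ η₁.T := by
    have : f ∈ η₁.T ∩ X := by rw [(hpt η₁ hη₁).1, hT1]; exact hf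
    exact (Finset.mem_inter.mp this).1
  have hf2 : f ∈ η₂.F := by
    have : f ∈ η₂.F ∩ X := by rw [(hpt η₂ hη₂).2, hF2]; exact hf
    exact (Finset.mem_inter.mp this).1
  exact Finset.mem_inter.mpr ⟨hXsens hf, Finset.mem_inter.mpr
    ⟨Finset.mem_sup.mpr ⟨η₁, hη₁, hf1⟩, Finset.mem_sup.mpr ⟨η₂, hη₂, hf2⟩⟩⟩

lemma rform_ok {φ : Form V} {st : St V} (h : (Rform φ st).OK) : st.OK :=
  h.mono Finset.subset_union_left Finset.subset_union_left

lemma regressS_nonempty {a : SAct V} {Δ : Finset (St V)} {δ' : St V}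
    (h : RegressS a Δ = some δ') : Δ.Nonempty := by
  rw [regressS_some_iff] at h
  obtain ⟨X, e, -, -, hs⟩ := appS_exists h.1
  have hcard := hs.2.2.2.1
  have : (Δ.image e).Nonempty := by
    rw [← Finset.card_pos, hcard]
    exact pow_pos (by norm_num) _
  obtain ⟨ε, hε⟩ := this
  obtain ⟨η, hη, -⟩ := Finset.mem_image.mp hε
  exact ⟨η, hη⟩

lemma regStarR_ok_back {c : Plan V} {x y : Option (St V)} (h : RegStarR c x y) :
    ∀ δa δb : St V, x = some δa → y = some δb → δb.OK → δa.OK := by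
  induction h with
  | bot c => intro _ _ h1; exact absurd h1 (by simp)
  | empty δ =>
    intro δa δb h1 h2 hok
    obtain rfl : δ = δa := by injection h1
    obtain rfl : δ = δb := by injection h2
    exact hok
  | action a δ =>
    intro δa δb h1 h2 hok
    obtain rfl : δ = δa := by injection h1
    exact regressN_ok_back h2 hok
  | caseBot a bs δ b hb hreg ih => intro _ _ _ h2; exact absurd h2 (by simp)
  | caseRBot a bs δ b st hb hreg hnd ih => intro _ _ _ h2; exact absurd h2 (by simp)
  | caseGo a bs δ r hreg hdis ih =>
    intro δa δb h1 h2 hok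
    obtain rfl : δ = δa := by injection h1
    obtain ⟨η, hη⟩ := regressS_nonempty h2
    obtain ⟨b, hb, hbη⟩ := List.mem_map.mp (List.mem_toFinset.mp hη)
    have hηok : η.OK := regressS_members_ok h2 hok η hη
    have : (r b).OK := by rw [← hbη] at hηok; exact rform_ok hηok
    exact ih b hb δ (r b) rfl rfl this
  | seq c₁ c₂ δ y x h2 h1 ih2 ih1 =>
    intro δa δb e1 e2 hok
    match y with
    | none => rw [regStarR_none_inv h1] at e2; exact absurd e2 (by simp)
    | some δm => exact ih2 δa δm e1 rfl (ih1 δm δb rfl e2 hok)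

lemma list_toFinset_map {α β : Type*} [DecidableEq α] [DecidableEq β]
    (l : List α) (f : α → β) : (l.map f).toFinset = l.toFinset.image f := by
  ext b; simp


lemma caseGo_key {N : Set (Plan V × St V)} (hsat : Saturated N)
    (a : SAct V) (bs : List (Form V × Plan V)) (r : Form V × Plan V → St V)
    (δb : St V)
    (h2 : RegressS a ((bs.map (fun b => Rform b.1 (r b))).toFinset) = some δb)
    (hok : δb.OK)
    (hmem : ∀ b ∈ bs, (r b).OK → ∃ p ∈ N, p.2 = r b) :
    ∃ p ∈ N, p.2 = δb := by
  set Δ := (bs.map (fun b => Rform b.1 (r b))).toFinset with hΔdef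
  obtain ⟨hApp, hδb⟩ := regressS_some_iff.mp h2
  set X := SaD a Δ with hXdef
  set supT := Δ.sup St.T with hsupTdef
  set supF := Δ.sup St.F with hsupFdef
  have hOKm : ∀ η ∈ Δ, η.OK := regressS_members_ok h2 hok
  have hknown : ∀ η ∈ Δ, a.sens ⊆ η.T ∪ η.F := hApp.2
  obtain ⟨e1, hp1, hi1, ⟨⟨X1, hsX1⟩, hpre1⟩⟩ := hApp.1
  obtain ⟨e0, hp0, hi0, hsX0⟩ := saD_spec (appS_exists hApp)
  have hXM : X ⊆ a.sens ∩ (supT ∩ supF) := sensed_subset hOKm hknown hp0 hsX0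
  have hMX : a.sens ∩ (supT ∩ supF) ⊆ X := by
    intro f hf
    by_contra hfX
    have hm := Finset.mem_inter.mp hf
    have h1 : f ∈ δb.T := by
      rw [hδb]
      exact Finset.mem_union_left _
        (Finset.mem_sdiff.mpr ⟨(Finset.mem_inter.mp hm.2).1, hfX⟩)
    have h2' : f ∈ δb.F := by
      rw [hδb]
      exact Finset.mem_union_left _
        (Finset.mem_sdiff.mpr ⟨(Finset.mem_inter.mp hm.2).2, hfX⟩)
    exact Finset.disjoint_left.mp hok h1 h2'
  have hcard10 : X1.card = X.card := by
    have c1 : Δ.card = 2 ^ X1.card := by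
      rw [← hsX1.2.2.2.1, Finset.card_image_of_injOn hi1]
    have c0 : Δ.card = 2 ^ X.card := by
      rw [← hsX0.2.2.2.1, Finset.card_image_of_injOn hi0]
    exact Nat.pow_right_injective (le_refl 2) (c1.symm.trans c0)
  have hX1 : X1 = X :=
    Finset.eq_of_subset_of_card_le ((sensed_subset hOKm hknown hp1 hsX1).trans hMX)
      (le_of_eq hcard10.symm)
  subst hX1
  have hXne : X.Nonempty := hsX1.1
  have hXsens : X ⊆ a.sens := hsX1.2.1
  have hXsupT : X ⊆ supT := fun f hf => (Finset.mem_inter.mp (Finset.mem_inter.mp (hXM hf)).2).1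
  have hXsupF : X ⊆ supF := fun f hf => (Finset.mem_inter.mp (Finset.mem_inter.mp (hXM hf)).2).2
  have hpartm : ∀ η ∈ Δ, η.T ∩ X = (e1 η).T ∩ X ∧ η.F ∩ X = (e1 η).F ∩ X :=
    fun η hη => part_transfer (hOKm η hη) (hXsens.trans (hknown η hη))
      (hp1 η hη).1 (hp1 η hη).2 (sensedSet_part hsX1 _ (Finset.mem_image_of_mem e1 hη))
  have huniqI := hsX1.2.2.2.2.1
  have hagree := hsX1.2.2.2.2.2
  have hηuniq : ∀ η ∈ Δ, ∀ η' ∈ Δ, η.T ∩ X = η'.T ∩ X → η = η' := by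
    intro η hη η' hη' hTeq
    have hpη := sensedSet_part hsX1 (e1 η) (Finset.mem_image_of_mem e1 hη)
    have hpη' := sensedSet_part hsX1 (e1 η') (Finset.mem_image_of_mem e1 hη')
    have hu := huniqI ((e1 η).T ∩ X) ((e1 η).F ∩ X)
      (by rw [hpη]; exact Finset.disjoint_sdiff)
      (by rw [hpη]; exact Finset.union_sdiff_of_subset Finset.inter_subset_right)
    have p1 : e1 η ∈ Δ.image e1 ∧ (e1 η).T ∩ X = (e1 η).T ∩ X ∧
        (e1 η).F ∩ X = (e1 η).F ∩ X := ⟨Finset.mem_image_of_mem e1 hη, rfl, rfl⟩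
    have hTeq' : (e1 η').T ∩ X = (e1 η).T ∩ X := by
      rw [← (hpartm η' hη').1, ← (hpartm η hη).1, hTeq]
    have p2 : e1 η' ∈ Δ.image e1 ∧ (e1 η').T ∩ X = (e1 η).T ∩ X ∧
        (e1 η').F ∩ X = (e1 η).F ∩ X :=
      ⟨Finset.mem_image_of_mem e1 hη', hTeq', by rw [hpη', hpη, hTeq']⟩
    exact hi1 (Finset.mem_coe.mpr hη) (Finset.mem_coe.mpr hη') (hu.unique p1 p2)
  have hηex : ∀ P : Finset V, ∃ η, P ⊆ X → (η ∈ Δ ∧ η.T ∩ X = P ∧ η.F ∩ X = X \ P) := by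
    intro P
    by_cases hP : P ⊆ X
    · obtain ⟨ε, ⟨hε, hεT, hεF⟩, -⟩ := huniqI P (X \ P) Finset.disjoint_sdiff
        (Finset.union_sdiff_of_subset hP)
      obtain ⟨η, hη, rfl⟩ := Finset.mem_image.mp hε
      exact ⟨η, fun _ => ⟨hη, by rw [(hpartm η hη).1, hεT], by rw [(hpartm η hη).2, hεF]⟩⟩
    · exact ⟨δb, fun h => absurd h hP⟩
  choose ηsel hηsel using hηex
  have hbex : ∀ P : Finset V, ∃ (b : Form V × Plan V) (p : Plan V × St V), P ⊆ X →
      (b ∈ bs ∧ Rform b.1 (r b) = ηsel P ∧ p ∈ N ∧ p.2 = r b) := by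
    intro P
    by_cases hP : P ⊆ X
    · have hηΔ : ηsel P ∈ Δ := (hηsel P hP).1
      obtain ⟨b, hb, hbη⟩ := List.mem_map.mp (List.mem_toFinset.mp hηΔ)
      have hrok : (r b).OK := rform_ok
        (by rw [show Rform b.1 (r b) = ηsel P from hbη]; exact hOKm _ hηΔ)
      obtain ⟨p, hp, hpe⟩ := hmem b hb hrok
      exact ⟨b, p, fun _ => ⟨hb, hbη, hp, hpe⟩⟩
    · exact ⟨(⟨∅, ∅⟩, Plan.empty), (Plan.empty, δb), fun h => absurd h hP⟩
  choose bsel psel hbsel using hbex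
  have hφdisj : Disjoint (supT \ X) (supF \ X) := by
    have ha : supT \ X ⊆ δb.T := by rw [hδb]; exact Finset.subset_union_left
    have hb : supF \ X ⊆ δb.F := by rw [hδb]; exact Finset.subset_union_left
    exact hok.mono ha hb
  set form : Finset V → Form V := fun P => (supT \ X ∪ P, supF \ X ∪ (X \ P)) with hformdef
  set stf : Finset V → St V := fun P => r (bsel P) with hstfdef
  set Mf : Finset V → St V := fun P => Rform (form P) (stf P) with hMfdef
  have hstT : ∀ P, P ⊆ X → (stf P).T ⊆ (ηsel P).T := by
    intro P hP
    rw [← (hbsel P hP).2.1]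
    exact Finset.subset_union_left
  have hstF : ∀ P, P ⊆ X → (stf P).F ⊆ (ηsel P).F := by
    intro P hP
    rw [← (hbsel P hP).2.1]
    exact Finset.subset_union_left
  have hMfT : ∀ P, (Mf P).T = (stf P).T ∪ (supT \ X ∪ P) := fun P => rfl
  have hMfF : ∀ P, (Mf P).F = (stf P).F ∪ (supF \ X ∪ (X \ P)) := fun P => rfl
  have hMTX : ∀ P, P ⊆ X → (Mf P).T ∩ X = P := by
    intro P hP
    apply subset_antisymm
    · intro f hf
      obtain ⟨hfT, hfX⟩ := Finset.mem_inter.mp hf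
      rw [hMfT] at hfT
      rcases Finset.mem_union.mp hfT with h | h
      · have hh : f ∈ (ηsel P).T ∩ X := Finset.mem_inter.mpr ⟨hstT P hP h, hfX⟩
        rw [(hηsel P hP).2.1] at hh; exact hh
      · rcases Finset.mem_union.mp h with h' | h'
        · exact absurd hfX (Finset.mem_sdiff.mp h').2
        · exact h'
    · intro f hf
      refine Finset.mem_inter.mpr ⟨?_, hP hf⟩
      rw [hMfT]
      exact Finset.mem_union_right _ (Finset.mem_union_right _ hf)
  have hMFX : ∀ P, P ⊆ X → (Mf P).F ∩ X = X \ P := by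
    intro P hP
    apply subset_antisymm
    · intro f hf
      obtain ⟨hfF, hfX⟩ := Finset.mem_inter.mp hf
      rw [hMfF] at hfF
      rcases Finset.mem_union.mp hfF with h | h
      · have hh : f ∈ (ηsel P).F ∩ X := Finset.mem_inter.mpr ⟨hstF P hP h, hfX⟩
        rw [(hηsel P hP).2.2] at hh; exact hh
      · rcases Finset.mem_union.mp h with h' | h'
        · exact absurd hfX (Finset.mem_sdiff.mp h').2
        · exact h'
    · intro f hf
      refine Finset.mem_inter.mpr ⟨?_, (Finset.mem_sdiff.mp hf).1⟩
      rw [hMfF]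
      exact Finset.mem_union_right _ (Finset.mem_union_right _ hf)
  have hMsubT : ∀ P, P ⊆ X → (Mf P).T ⊆ supT := by
    intro P hP
    rw [hMfT]
    have h1 : (ηsel P).T ⊆ supT := Finset.le_sup (f := St.T) (hηsel P hP).1
    exact Finset.union_subset ((hstT P hP).trans h1)
      (Finset.union_subset Finset.sdiff_subset (hP.trans hXsupT))
  have hMsubF : ∀ P, P ⊆ X → (Mf P).F ⊆ supF := by
    intro P hP
    rw [hMfF]
    have h1 : (ηsel P).F ⊆ supF := Finset.le_sup (f := St.F) (hηsel P hP).1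
    exact Finset.union_subset ((hstF P hP).trans h1)
      (Finset.union_subset Finset.sdiff_subset ((Finset.sdiff_subset).trans hXsupF))
  have hMOK : ∀ P, P ⊆ X → (Mf P).OK := by
    intro P hP
    have hη := hηsel P hP
    rw [St.OK, Finset.disjoint_left]
    intro f hfT hfF
    rw [hMfT] at hfT
    rw [hMfF] at hfF
    rcases Finset.mem_union.mp hfT with h1 | h1
    · have hfη : f ∈ (ηsel P).T := hstT P hP h1
      rcases Finset.mem_union.mp hfF with h2 | h2
      · exact Finset.disjoint_left.mp (hOKm _ hη.1) hfη (hstF P hP h2)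
      rcases Finset.mem_union.mp h2 with h3 | h3
      · have hfX : f ∉ X := (Finset.mem_sdiff.mp h3).2
        have hh : f ∈ supT \ X :=
          Finset.mem_sdiff.mpr ⟨Finset.le_sup (f := St.T) hη.1 hfη, hfX⟩
        exact Finset.disjoint_left.mp hφdisj hh h3
      · have hh : f ∈ (ηsel P).T ∩ X := Finset.mem_inter.mpr ⟨hfη, (Finset.mem_sdiff.mp h3).1⟩
        rw [hη.2.1] at hh
        exact (Finset.mem_sdiff.mp h3).2 hh
    rcases Finset.mem_union.mp h1 with h1' | h1'
    · have hfX : f ∉ X := (Finset.mem_sdiff.mp h1').2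
      rcases Finset.mem_union.mp hfF with h2 | h2
      · have hfη : f ∈ (ηsel P).F := hstF P hP h2
        have hh : f ∈ supF \ X :=
          Finset.mem_sdiff.mpr ⟨Finset.le_sup (f := St.F) hη.1 hfη, hfX⟩
        exact Finset.disjoint_left.mp hφdisj h1' hh
      rcases Finset.mem_union.mp h2 with h3 | h3
      · exact Finset.disjoint_left.mp hφdisj h1' h3
      · exact hfX (Finset.mem_sdiff.mp h3).1
    · rcases Finset.mem_union.mp hfF with h2 | h2
      · have hh : f ∈ (ηsel P).F ∩ X := Finset.mem_inter.mpr ⟨hstF P hP h2, hP h1'⟩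
        rw [hη.2.2] at hh
        exact (Finset.mem_sdiff.mp hh).2 h1'
      rcases Finset.mem_union.mp h2 with h3 | h3
      · exact (Finset.mem_sdiff.mp h3).2 (hP h1')
      · exact (Finset.mem_sdiff.mp h3).2 h1'
  have hMknown : ∀ P, P ⊆ X → a.sens ⊆ (Mf P).T ∪ (Mf P).F := by
    intro P hP f hf
    by_cases hfX : f ∈ X
    · by_cases hfP : f ∈ P
      · refine Finset.mem_union_left _ ?_
        rw [hMfT]
        exact Finset.mem_union_right _ (Finset.mem_union_right _ hfP)
      · refine Finset.mem_union_right _ ?_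
        rw [hMfF]
        exact Finset.mem_union_right _ (Finset.mem_union_right _ (Finset.mem_sdiff.mpr ⟨hfX, hfP⟩))
    · have hη := (hηsel P hP).1
      rcases Finset.mem_union.mp (hknown _ hη hf) with h | h
      · refine Finset.mem_union_left _ ?_
        rw [hMfT]
        exact Finset.mem_union_right _ (Finset.mem_union_left _
          (Finset.mem_sdiff.mpr ⟨Finset.le_sup (f := St.T) hη h, hfX⟩))
      · refine Finset.mem_union_right _ ?_
        rw [hMfF]
        exact Finset.mem_union_right _ (Finset.mem_union_left _
          (Finset.mem_sdiff.mpr ⟨Finset.le_sup (f := St.F) hη h, hfX⟩))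
  have hφ1e : ∀ P, P ⊆ X → supT \ X ⊆ (e1 (ηsel P)).T := by
    intro P hP f hf
    obtain ⟨hfT, hfX⟩ := Finset.mem_sdiff.mp hf
    obtain ⟨η₂, hη₂, hfη₂⟩ := Finset.mem_sup.mp hfT
    have hf2 : f ∈ (e1 η₂).T := (hp1 η₂ hη₂).1 hfη₂
    by_cases he : e1 η₂ = e1 (ηsel P)
    · rw [← he]; exact hf2
    · have hag := (hagree (e1 η₂) (Finset.mem_image_of_mem e1 hη₂) (e1 (ηsel P))
        (Finset.mem_image_of_mem e1 (hηsel P hP).1) he).1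
      have hh : f ∈ (e1 (ηsel P)).T \ X := by
        rw [← hag]; exact Finset.mem_sdiff.mpr ⟨hf2, hfX⟩
      exact (Finset.mem_sdiff.mp hh).1
  have hφ2e : ∀ P, P ⊆ X → supF \ X ⊆ (e1 (ηsel P)).F := by
    intro P hP f hf
    obtain ⟨hfF, hfX⟩ := Finset.mem_sdiff.mp hf
    obtain ⟨η₂, hη₂, hfη₂⟩ := Finset.mem_sup.mp hfF
    have hf2 : f ∈ (e1 η₂).F := (hp1 η₂ hη₂).2 hfη₂
    by_cases he : e1 η₂ = e1 (ηsel P)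
    · rw [← he]; exact hf2
    · have hag := (hagree (e1 η₂) (Finset.mem_image_of_mem e1 hη₂) (e1 (ηsel P))
        (Finset.mem_image_of_mem e1 (hηsel P hP).1) he).2
      have hh : f ∈ (e1 (ηsel P)).F \ X := by
        rw [← hag]; exact Finset.mem_sdiff.mpr ⟨hf2, hfX⟩
      exact (Finset.mem_sdiff.mp hh).1
  have hMpext : ∀ P, P ⊆ X → pext (Mf P) (e1 (ηsel P)) := by
    intro P hP
    have hη := hηsel P hP
    constructor
    · rw [hMfT]
      refine Finset.union_subset ((hstT P hP).trans (hp1 _ hη.1).1)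
        (Finset.union_subset (hφ1e P hP) ?_)
      intro f hf
      have hh : f ∈ (ηsel P).T := by
        have h2 := hη.2.1
        rw [← h2] at hf
        exact (Finset.mem_inter.mp hf).1
      exact (hp1 _ hη.1).1 hh
    · rw [hMfF]
      refine Finset.union_subset ((hstF P hP).trans (hp1 _ hη.1).2)
        (Finset.union_subset (hφ2e P hP) ?_)
      intro f hf
      have hh : f ∈ (ηsel P).F := by
        have h2 := hη.2.2
        rw [← h2] at hf
        exact (Finset.mem_inter.mp hf).1
      exact (hp1 _ hη.1).2 hh
  set bs' : List (Form V × Plan V) := X.powerset.toList.map (fun P => (form P, (psel P).1))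
    with hbs'def
  set ds' : Form V × Plan V → St V := fun b => stf (b.1.1 ∩ X) with hds'def
  have hform1X : ∀ P, P ⊆ X → (form P).1 ∩ X = P := by
    intro P hP
    apply subset_antisymm
    · intro f hf
      obtain ⟨h1, h22⟩ := Finset.mem_inter.mp hf
      rcases Finset.mem_union.mp h1 with h | h
      · exact absurd h22 (Finset.mem_sdiff.mp h).2
      · exact h
    · intro f hf
      exact Finset.mem_inter.mpr ⟨Finset.mem_union_right _ hf, hP hf⟩
  have hds'form : ∀ P, P ⊆ X → Rform (form P) (ds' (form P, (psel P).1)) = Mf P := by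
    intro P hP
    show Rform (form P) (stf ((form P).1 ∩ X)) = Mf P
    rw [hform1X P hP]
  have hΔ' : (bs'.map (fun b => Rform b.1 (ds' b))).toFinset = X.powerset.image Mf := by
    rw [hbs'def, List.map_map]
    have hmc : X.powerset.toList.map
        ((fun b : Form V × Plan V => Rform b.1 (ds' b)) ∘ fun P => (form P, (psel P).1))
        = X.powerset.toList.map Mf := by
      apply List.map_congr_left
      intro P hP
      exact hds'form P (Finset.mem_powerset.mp (Finset.mem_toList.mp hP))
    rw [hmc, list_toFinset_map, Finset.toList_toFinset]
  have hsupT' : (X.powerset.image Mf).sup St.T = supT := by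
    apply subset_antisymm
    · intro f hf
      obtain ⟨M, hM, hfM⟩ := Finset.mem_sup.mp hf
      obtain ⟨P, hP, rfl⟩ := Finset.mem_image.mp hM
      exact hMsubT P (Finset.mem_powerset.mp hP) hfM
    · intro f hf
      by_cases hfX : f ∈ X
      · refine Finset.mem_sup.mpr ⟨Mf X, Finset.mem_image_of_mem Mf (Finset.mem_powerset_self X), ?_⟩
        rw [hMfT]
        exact Finset.mem_union_right _ (Finset.mem_union_right _ hfX)
      · refine Finset.mem_sup.mpr ⟨Mf ∅, Finset.mem_image_of_mem Mf (Finset.empty_mem_powerset X), ?_⟩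
        rw [hMfT]
        exact Finset.mem_union_right _ (Finset.mem_union_left _ (Finset.mem_sdiff.mpr ⟨hf, hfX⟩))
  have hsupF' : (X.powerset.image Mf).sup St.F = supF := by
    apply subset_antisymm
    · intro f hf
      obtain ⟨M, hM, hfM⟩ := Finset.mem_sup.mp hf
      obtain ⟨P, hP, rfl⟩ := Finset.mem_image.mp hM
      exact hMsubF P (Finset.mem_powerset.mp hP) hfM
    · intro f hf
      by_cases hfX : f ∈ X
      · refine Finset.mem_sup.mpr ⟨Mf ∅, Finset.mem_image_of_mem Mf (Finset.empty_mem_powerset X), ?_⟩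
        rw [hMfF]
        exact Finset.mem_union_right _ (Finset.mem_union_right _
          (Finset.mem_sdiff.mpr ⟨hfX, Finset.notMem_empty f⟩))
      · refine Finset.mem_sup.mpr ⟨Mf ∅, Finset.mem_image_of_mem Mf (Finset.empty_mem_powerset X), ?_⟩
        rw [hMfF]
        exact Finset.mem_union_right _ (Finset.mem_union_left _ (Finset.mem_sdiff.mpr ⟨hf, hfX⟩))
  set e' : St V → St V := fun M => e1 (ηsel (M.T ∩ X)) with he'def
  have he'M : ∀ P, P ⊆ X → e' (Mf P) = e1 (ηsel P) := by
    intro P hP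
    show e1 (ηsel ((Mf P).T ∩ X)) = e1 (ηsel P)
    rw [hMTX P hP]
  have hηselinj : ∀ P, P ⊆ X → ∀ Q, Q ⊆ X → ηsel P = ηsel Q → P = Q := by
    intro P hP Q hQ h
    rw [← (hηsel P hP).2.1, ← (hηsel Q hQ).2.1, h]
  have hMfinj : ∀ P, P ⊆ X → ∀ Q, Q ⊆ X → Mf P = Mf Q → P = Q := by
    intro P hP Q hQ h
    rw [← hMTX P hP, ← hMTX Q hQ, h]
  have himg : (X.powerset.image Mf).image e' = Δ.image e1 := by
    apply subset_antisymm
    · intro ε hε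
      obtain ⟨M, hM, rfl⟩ := Finset.mem_image.mp hε
      obtain ⟨P, hP, rfl⟩ := Finset.mem_image.mp hM
      rw [he'M P (Finset.mem_powerset.mp hP)]
      exact Finset.mem_image_of_mem e1 (hηsel P (Finset.mem_powerset.mp hP)).1
    · intro ε hε
      obtain ⟨η, hη, rfl⟩ := Finset.mem_image.mp hε
      have hPX : η.T ∩ X ⊆ X := Finset.inter_subset_right
      have hη' : ηsel (η.T ∩ X) = η := by
        apply hηuniq _ (hηsel _ hPX).1 _ hη
        rw [(hηsel _ hPX).2.1]
      refine Finset.mem_image.mpr ⟨Mf (η.T ∩ X),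
        Finset.mem_image_of_mem Mf (Finset.mem_powerset.mpr hPX), ?_⟩
      rw [he'M _ hPX, hη']
  have hApp' : AppS a (X.powerset.image Mf) := by
    constructor
    · refine ⟨e', ?_, ?_, ?_, ?_⟩
      · intro M hM
        obtain ⟨P, hP, rfl⟩ := Finset.mem_image.mp hM
        have hPX := Finset.mem_powerset.mp hP
        rw [he'M P hPX]
        exact hMpext P hPX
      · intro M hM M' hM' heq
        obtain ⟨P, hP, rfl⟩ := Finset.mem_image.mp (Finset.mem_coe.mp hM)
        obtain ⟨Q, hQ, rfl⟩ := Finset.mem_image.mp (Finset.mem_coe.mp hM')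
        have hPX := Finset.mem_powerset.mp hP
        have hQX := Finset.mem_powerset.mp hQ
        rw [he'M P hPX, he'M Q hQX] at heq
        have hee := hi1 (Finset.mem_coe.mpr (hηsel P hPX).1) (Finset.mem_coe.mpr (hηsel Q hQX).1) heq
        rw [hηselinj P hPX Q hQX hee]
      · exact ⟨X, by rw [himg]; exact hsX1⟩
      · rw [himg]; exact hpre1
    · intro M hM
      obtain ⟨P, hP, rfl⟩ := Finset.mem_image.mp hM
      exact hMknown P (Finset.mem_powerset.mp hP)
  have hOKm' : ∀ M ∈ X.powerset.image Mf, M.OK := by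
    intro M hM
    obtain ⟨P, hP, rfl⟩ := Finset.mem_image.mp hM
    exact hMOK P (Finset.mem_powerset.mp hP)
  have hknown' : ∀ M ∈ X.powerset.image Mf, a.sens ⊆ M.T ∪ M.F := hApp'.2
  obtain ⟨e0', hp0', hi0', hsX0'⟩ := saD_spec (appS_exists hApp')
  have hsub' : SaD a (X.powerset.image Mf) ⊆ X := by
    refine (sensed_subset hOKm' hknown' hp0' hsX0').trans ?_
    rw [hsupT', hsupF']
    exact hMX
  have hpowcard : (X.powerset.image Mf).card = 2 ^ X.card := by
    rw [Finset.card_image_of_injOn, Finset.card_powerset]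
    intro P hP Q hQ h
    exact hMfinj P (Finset.mem_powerset.mp (Finset.mem_coe.mp hP))
      Q (Finset.mem_powerset.mp (Finset.mem_coe.mp hQ)) h
  have hcard' : X.card = (SaD a (X.powerset.image Mf)).card := by
    have c1 : (X.powerset.image Mf).card = 2 ^ (SaD a (X.powerset.image Mf)).card := by
      rw [← hsX0'.2.2.2.1, Finset.card_image_of_injOn hi0']
    exact Nat.pow_right_injective (le_refl 2) (hpowcard.symm.trans c1)
  have hSaD' : SaD a (X.powerset.image Mf) = X :=
    Finset.eq_of_subset_of_card_le hsub' (le_of_eq hcard')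
  have hreg' : RegressS a ((bs'.map (fun b => Rform b.1 (ds' b))).toFinset) = some δb := by
    rw [hΔ', regressS_some_iff]
    refine ⟨hApp', ?_⟩
    rw [hSaD', hsupT', hsupF']
    exact hδb
  have hforms : (bs'.map Prod.fst).toFinset = X.powerset.image form := by
    rw [hbs'def, List.map_map]
    have hmc : X.powerset.toList.map
        (Prod.fst ∘ fun P => (form P, (psel P).1)) = X.powerset.toList.map form := rfl
    rw [hmc, list_toFinset_map, Finset.toList_toFinset]
  have hspans : spans (bs'.map Prod.fst).toFinset X := by
    refine ⟨(supT \ X, supF \ X), hφdisj, ?_, ?_, ?_⟩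
    · rw [hforms]
      intro hmem'
      obtain ⟨P, hP, hPeq⟩ := Finset.mem_image.mp hmem'
      have h1 : supT \ X ∪ P = supT \ X := congrArg Prod.fst hPeq
      have h2 : supF \ X ∪ (X \ P) = supF \ X := congrArg Prod.snd hPeq
      have hPsub : P ⊆ X := Finset.mem_powerset.mp hP
      have hPempty : P = ∅ := by
        rw [Finset.eq_empty_iff_forall_notMem]
        intro f hf
        have hh : f ∈ supT \ X := h1 ▸ Finset.mem_union_right _ hf
        exact (Finset.mem_sdiff.mp hh).2 (hPsub hf)
      rw [hPempty, Finset.sdiff_empty] at h2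
      obtain ⟨f, hf⟩ := hXne
      have hh : f ∈ supF \ X := h2 ▸ Finset.mem_union_right _ hf
      exact (Finset.mem_sdiff.mp hh).2 hf
    · rw [Finset.disjoint_union_right]
      exact ⟨Finset.sdiff_disjoint.symm, Finset.sdiff_disjoint.symm⟩
    · rw [hforms, BIN, Finset.image_image]
      rfl
  refine hsat.2 a bs' ds' X δb ?_ hXne hXsens hspans ?_ hreg'
  · intro b hb
    rw [hbs'def] at hb
    obtain ⟨P, hP, rfl⟩ := List.mem_map.mp hb
    have hPX : P ⊆ X := Finset.mem_powerset.mp (Finset.mem_toList.mp hP)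
    have hds : ds' (form P, (psel P).1) = r (bsel P) := by
      show stf ((form P).1 ∩ X) = r (bsel P)
      rw [hform1X P hPX]
    show ((psel P).1, ds' (form P, (psel P).1)) ∈ N
    rw [hds, ← (hbsel P hPX).2.2.2]
    exact (hbsel P hPX).2.2.1
  · intro b hb
    rw [hbs'def] at hb
    obtain ⟨P, hP, rfl⟩ := List.mem_map.mp hb
    have hPX : P ⊆ X := Finset.mem_powerset.mp (Finset.mem_toList.mp hP)
    have h := hMOK P hPX
    rw [← hds'form P hPX] at h
    exact h

lemma regStarR_complete {N : Set (Plan V × St V)} (hsat : Saturated N)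
    {c : Plan V} {x y : Option (St V)} (h : RegStarR c x y) :
    ∀ δa δb : St V, x = some δa → y = some δb → δb.OK →
      (∃ p ∈ N, p.2 = δa) → ∃ p ∈ N, p.2 = δb := by
  induction h with
  | bot c => intro _ _ h1; exact absurd h1 (by simp)
  | empty δ =>
    intro δa δb h1 h2 hok hbase
    obtain rfl : δ = δa := by injection h1
    obtain rfl : δ = δb := by injection h2
    exact hbase
  | action a δ =>
    intro δa δb h1 h2 hok hbase
    obtain rfl : δ = δa := by injection h1
    obtain ⟨p, hp, hpe⟩ := hbase
    exact hsat.1 p.1 p.2 a δb (by rwa [Prod.mk.eta]) (by rwa [hpe])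
  | caseBot a bs δ b hb hreg ih => intro _ _ _ h2; exact absurd h2 (by simp)
  | caseRBot a bs δ b st hb hreg hnd ih => intro _ _ _ h2; exact absurd h2 (by simp)
  | caseGo a bs δ r hreg hdis ih =>
    intro δa δb h1 h2 hok hbase
    obtain rfl : δ = δa := by injection h1
    exact caseGo_key hsat a bs r δb h2 hok
      (fun b hb hrok => ih b hb δ (r b) rfl rfl hrok hbase)
  | seq c₁ c₂ δ y x h2 h1 ih2 ih1 =>
    intro δa δb e1 e2 hok hbase
    match y with
    | none => rw [regStarR_none_inv h1] at e2; exact absurd e2 (by simp)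
    | some δm =>
      have hmok : δm.OK := regStarR_ok_back h1 δm δb rfl e2 hok
      exact ih1 δm δb rfl e2 hok (ih2 δa δm e1 rfl hmok hbase)
/-- completeness of the regression search algorithm: if a reachable
set `N` is saturated and `P` has a regression solution, then `N` contains a pair
`⟨c',δ'⟩` with `σ_I ∈ ext(δ')`. -/
theorem solve_complete
    (σI δG : St V) (hI : σI.OK) (hG : δG.OK)
    (N : Set (Plan V × St V)) (hN : Reach δG N) (hsat : Saturated N)
    (hsol : ∃ c : Plan V, c.WF ∧
      ∃ δ : St V, RegStarR c (some δG) (some δ) ∧ σI ∈ exts δ) :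
    ∃ p ∈ N, σI ∈ exts p.2 := by
  obtain ⟨c, hwf, δ, hreg, hext⟩ := hsol
  have hδok : δ.OK := hI.mono hext.2.1 hext.2.2
  obtain ⟨p, hp, hpe⟩ := regStarR_complete hsat hreg δG δ rfl rfl hδok
    ⟨(Plan.empty, δG), reach_empty_mem hN, rfl⟩
  exact ⟨p, hp, hpe ▸ hext⟩
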